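/- Let R be an integral domain, let a_1, …, a_n ∈ R and let c ∈ R. Then the determinant of the Vieta matrix of a_1, …, a_n equals the determinant of the Vieta matrix of a_1 − c, a_2 − c, …, a_n − c. -/

import Mathlib

/-!
Up to reversing the order of its rows, column `j` of the Vieta matrix lists the coefficients of
`∏_{k ≠ j} (X + a_k)`. Replacing every `a_k` by `a_k - c` substitutes `X - c` for `X` in each of
these polynomials of degree `< n`, which acts on coefficient vectors by a unitriangular matrix
of binomial coefficients. Hence the determinant does not change.
-/

open Polynomial Finset

/-- The Vieta matrix of `a : Fin n → R`: its `(i, j)` entry is the elementary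
symmetric polynomial of degree `i` evaluated at the elements `a k` for `k ≠ j`. -/
def vietaMatrix {R : Type*} [CommRing R] (n : ℕ) (a : Fin n → R) :
    Matrix (Fin n) (Fin n) R :=
  Matrix.of fun i j => ((Finset.univ.erase j).val.map a).esymm i

section

variable {R : Type*} [CommRing R]

/-- The matrix of `taylor r` on polynomials of degree `< n`, in the monomial basis. -/
def taylorMatrix (n : ℕ) (r : R) : Matrix (Fin n) (Fin n) R :=
  Matrix.of fun i k => ((k : ℕ).choose i : R) * r ^ ((k : ℕ) - i)

theorem det_taylorMatrix (n : ℕ) (r : R) :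
    (taylorMatrix n r).det = 1 := by
  rw [Matrix.det_of_isUpperTriangular]
  · exact prod_eq_one fun i _ => by simp [taylorMatrix]
  · intro i k hki
    simp [taylorMatrix, Nat.choose_eq_zero_of_lt (show (k : ℕ) < i from hki)]

theorem coeff_taylor_eq_sum {n : ℕ} {p : R[X]} (hp : p.natDegree < n)
    (r : R) (i : ℕ) :
    (taylor r p).coeff i = ∑ k ∈ range n, (k.choose i : R) * r ^ (k - i) * p.coeff k := by
  conv_lhs => rw [p.as_sum_range' n hp]
  simp only [map_sum, finsetSum_coeff, taylor_monomial, coeff_C_mul, coeff_X_add_C_pow]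
  exact sum_congr rfl fun k _ => by ring

def coeffMatrix {n : ℕ} (p : Fin n → R[X]) :
    Matrix (Fin n) (Fin n) R :=
  Matrix.of fun i j => (p j).coeff i

theorem coeffMatrix_taylor {n : ℕ} {p : Fin n → R[X]}
    (hp : ∀ j, (p j).natDegree < n) (r : R) :
    coeffMatrix (fun j => taylor r (p j)) = taylorMatrix n r * coeffMatrix p := by
  ext i j
  simp only [coeffMatrix, taylorMatrix, Matrix.mul_apply, Matrix.of_apply,
    coeff_taylor_eq_sum (hp j), Fin.sum_univ_eq_sum_range
      (fun k => (k.choose i : R) * r ^ (k - i) * (p j).coeff k)]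

theorem det_coeffMatrix_taylor {n : ℕ} {p : Fin n → R[X]}
    (hp : ∀ j, (p j).natDegree < n) (r : R) :
    (coeffMatrix fun j => taylor r (p j)).det = (coeffMatrix p).det := by
  rw [coeffMatrix_taylor hp, Matrix.det_mul, det_taylorMatrix, one_mul]

variable {n : ℕ}

noncomputable def prodErase (a : Fin n → R) (j : Fin n) : R[X] :=
  ∏ k ∈ univ.erase j, (X + C (a k))

theorem natDegree_prodErase_lt (a : Fin n → R) (j : Fin n) : (prodErase a j).natDegree < n := by
  unfold prodErase
  calc (∏ k ∈ univ.erase j, (X + C (a k))).natDegree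
      ≤ ∑ k ∈ univ.erase j, (X + C (a k)).natDegree := natDegree_prod_le _ _
    _ ≤ ∑ _k ∈ univ.erase j, 1 := by
      gcongr
      exact natDegree_add_C.trans_le natDegree_X_le
    _ = n - 1 := by simp [card_erase_of_mem]
    _ < n := Nat.sub_one_lt_of_lt j.pos

theorem prodErase_sub (a : Fin n → R) (c : R) (j : Fin n) :
    prodErase (fun k => a k - c) j = taylor (-c) (prodErase a j) := by
  unfold prodErase
  change _ = taylorAlgHom (-c) _
  rw [map_prod]
  refine prod_congr rfl fun k _ => ?_
  change _ = taylor (-c) _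
  rw [map_add, taylor_X, taylor_C, C_sub, C_neg]
  ring

theorem vietaMatrix_eq_submatrix_coeffMatrix (a : Fin n → R) :
    vietaMatrix n a = (coeffMatrix (prodErase a)).submatrix Fin.revPerm id := by
  ext i j
  have hcard : Multiset.card (univ.erase j).val = n - 1 := by simp
  have hle : n - 1 - i ≤ Multiset.card (univ.erase j).val := by omega
  have hcoeff := Multiset.prod_X_add_C_coeff' (univ.erase j).val a hle
  rw [hcard, Nat.sub_sub_self (Nat.le_sub_one_of_lt i.isLt)] at hcoeff
  simp only [vietaMatrix, coeffMatrix, prodErase, Matrix.submatrix_apply, Matrix.of_apply, id,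
    Fin.revPerm_apply, Fin.val_rev, show n - (i + 1) = n - 1 - i by omega]
  exact hcoeff.symm

theorem det_vietaMatrix (a : Fin n → R) :
    (vietaMatrix n a).det =
      Equiv.Perm.sign (Fin.revPerm (n := n)) * (coeffMatrix (prodErase a)).det := by
  rw [vietaMatrix_eq_submatrix_coeffMatrix, Matrix.det_permute]

end

theorem vieta_det_shift_invariant_general {R : Type*} [CommRing R]
    (n : ℕ) (a : Fin n → R) (c : R) :
    (vietaMatrix n a).det = (vietaMatrix n (fun i => a i - c)).det := by
  rw [det_vietaMatrix, det_vietaMatrix, funext (prodErase_sub a c),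
    det_coeffMatrix_taylor (natDegree_prodErase_lt a)]

theorem vieta_det_shift_invariant {R : Type*} [CommRing R] [IsDomain R]
    (n : ℕ) (hn : 1 ≤ n) (a : Fin n → R) (c : R) :
    (vietaMatrix n a).det = (vietaMatrix n (fun i => a i - c)).det :=
  vieta_det_shift_invariant_general n a c
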